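/- Continuity lemma for cut functionals: let Wₙ, W ∈ W₀ with ‖Wₙ − W‖_□ → 0, let f : {-1,1}² → ℝ, and let uₙ : [0,1] → {-1,1} be measurable with indicator θⁿ of {uₙ = 1} converging weakly-* in L^∞([0,1]) to θ : [0,1] → [0,1]. Then ∫_{[0,1]²} Wₙ(x,y) f(uₙ(x), uₙ(y)) dx dy converges to Σ_{h,k ∈ {-1,1}} f(h,k) ∫_{[0,1]²} W(x,y) θ_h(x) θ_k(y) dx dy, where θ₁ = θ and θ₋₁ = 1 − θ. -/

import Mathlib

open MeasureTheory Set Filter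

/-- The unit interval. -/
def I01 : Set ℝ := Set.Icc 0 1

/-- The cut norm of `U`: supremum over measurable subsets `S, T ⊆ [0,1]`
of `|∫_{S×T} U|`. -/
noncomputable def cutNorm (U : ℝ → ℝ → ℝ) : ℝ :=
  ⨆ p : {p : Set ℝ × Set ℝ //
      MeasurableSet p.1 ∧ MeasurableSet p.2 ∧ p.1 ⊆ I01 ∧ p.2 ⊆ I01},
    |∫ x in p.1.1, ∫ y in p.1.2, U x y|

open Function Topology

/-!
Since `uₙ` only takes the values `±1`, `f (uₙ x) (uₙ y)` is a combination of the four products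
`χ_{uₙ = h}(x) χ_{uₙ = k}(y)`, so it suffices to show `∫∫ Wₙ χ_{Sₙ}(x) χ_{Tₙ}(y) → ∫∫ W a(x) b(y)`
whenever `χ_{Sₙ} → a` and `χ_{Tₙ} → b` weakly-*. Split `Wₙ = (Wₙ - W) + W`. The first part is
integrated over the rectangle `Sₙ × Tₙ`, so it is bounded by `‖Wₙ - W‖_□`. For the second, with
`T_W φ (x) = ∫ W(x, y) φ(y) dy`, testing `χ_{Tₙ}` against `W(x, ·)` gives `T_W χ_{Tₙ} → T_W b`
pointwise, hence in `L¹` by dominated convergence, and `∫ χ_{Sₙ} T_W b → ∫ a T_W b` by weak-*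
convergence of `χ_{Sₙ}`.
-/

lemma abs_mul_le_of_abs_le {p q M B : ℝ} (hp : |p| ≤ M) (hq : |q| ≤ B) : |p * q| ≤ M * B := by
  rw [abs_mul]
  exact mul_le_mul hp hq (abs_nonneg q) ((abs_nonneg p).trans hp)

lemma abs_indicator_one_le {α : Type*} (S : Set α) (x : α) : |S.indicator (1 : α → ℝ) x| ≤ 1 := by
  by_cases hx : x ∈ S <;> simp [hx]

section

variable {α β : Type*} [MeasurableSpace β] {ν : Measure β}

noncomputable def integralOp (ν : Measure β) (K : α → β → ℝ) (φ : β → ℝ) (x : α) : ℝ :=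
  ∫ y, K x y * φ y ∂ν

lemma abs_integralOp_le [IsFiniteMeasure ν] {K : α → β → ℝ} {M : ℝ} (hKM : ∀ x y, |K x y| ≤ M)
    {φ : β → ℝ} {B : ℝ} (hφB : ∀ y, |φ y| ≤ B) (x : α) :
    |integralOp ν K φ x| ≤ M * B * ν.real univ := by
  rw [← Real.norm_eq_abs]
  exact norm_integral_le_of_norm_le_const
    (ae_of_all _ fun y => abs_mul_le_of_abs_le (hKM x y) (hφB y))

variable [MeasurableSpace α] {μ : Measure α}

def TendstoWeakStar (μ : Measure α) (c : ℕ → α → ℝ) (a : α → ℝ) : Prop :=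
  ∀ φ : α → ℝ, Integrable φ μ →
    Tendsto (fun n => ∫ x, c n x * φ x ∂μ) atTop (𝓝 (∫ x, a x * φ x ∂μ))

lemma TendstoWeakStar.one_sub {c : ℕ → α → ℝ} {a : α → ℝ} (h : TendstoWeakStar μ c a)
    (hc : ∀ n, Measurable (c n)) (ha : Measurable a) {C : ℝ} (hcC : ∀ n x, |c n x| ≤ C)
    (haC : ∀ x, |a x| ≤ C) :
    TendstoWeakStar μ (fun n x => 1 - c n x) (fun x => 1 - a x) := by
  intro φ hφ
  have integral_one_sub_mul : ∀ g : α → ℝ, Measurable g → (∀ x, |g x| ≤ C) →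
      ∫ x, (1 - g x) * φ x ∂μ = ∫ x, φ x ∂μ - ∫ x, g x * φ x ∂μ := fun g hg hgC => by
    simp only [sub_mul, one_mul]
    exact integral_sub hφ (hφ.bdd_mul hg.aestronglyMeasurable (ae_of_all _ hgC))
  simp only [integral_one_sub_mul _ (hc _) (hcC _), integral_one_sub_mul a ha haC]
  exact tendsto_const_nhds.sub (h φ hφ)

lemma TendstoWeakStar.indicator_eq_neg_one {u : ℕ → α → ℝ} (hu : ∀ n, Measurable (u n))
    (hu1 : ∀ n x, u n x = -1 ∨ u n x = 1) {θ : α → ℝ} (hθ : Measurable θ) (hθ1 : ∀ x, |θ x| ≤ 1)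
    (h : TendstoWeakStar μ (fun n => {x | u n x = 1}.indicator 1) θ) :
    TendstoWeakStar μ (fun n => {x | u n x = -1}.indicator 1) (fun x => 1 - θ x) := by
  have hcompl : (fun n => {x | u n x = -1}.indicator (1 : α → ℝ))
      = fun n x => 1 - {x | u n x = 1}.indicator 1 x := by
    funext n x
    rcases hu1 n x with hx | hx <;> norm_num [hx]
  rw [hcompl]
  exact h.one_sub (fun n => measurable_const.indicator (hu n (measurableSet_singleton 1))) hθ
    (fun n => abs_indicator_one_le _) hθ1

lemma integral_integral_mul_mul_eq_integral_mul_integralOp (K : α → β → ℝ) (c : α → ℝ)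
    (d : β → ℝ) :
    ∫ x, ∫ y, K x y * (c x * d y) ∂ν ∂μ = ∫ x, c x * integralOp ν K d x ∂μ := by
  simp only [integralOp, ← integral_const_mul, mul_left_comm]

lemma setIntegral_indicator_one_mul {s S : Set α} (hS : MeasurableSet S) (f : α → ℝ) :
    ∫ x in s, S.indicator 1 x * f x ∂μ = ∫ x in s ∩ S, f x ∂μ := by
  simp only [← indicator_mul_left, Pi.one_apply, one_mul]
  exact setIntegral_indicator hS

variable [IsFiniteMeasure μ] [IsFiniteMeasure ν]

lemma integrable_of_abs_le {f : α → ℝ} (hf : Measurable f) {C : ℝ} (hC : ∀ x, |f x| ≤ C) :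
    Integrable f μ :=
  .of_bound hf.aestronglyMeasurable C (ae_of_all _ hC)

lemma integrable_uncurry_mul_indicator_mul_indicator {K : α → β → ℝ}
    (hK : Measurable (uncurry K)) {M : ℝ} (hKM : ∀ x y, |K x y| ≤ M) {S : Set α} {T : Set β}
    (hS : MeasurableSet S) (hT : MeasurableSet T) :
    Integrable (uncurry fun x y => K x y * (S.indicator 1 x * T.indicator 1 y)) (μ.prod ν) := by
  refine integrable_of_abs_le (C := M * (1 * 1))
    (hK.mul (((measurable_const.indicator hS).comp measurable_fst).mul
      ((measurable_const.indicator hT).comp measurable_snd))) fun p => ?_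
  exact abs_mul_le_of_abs_le (hKM _ _)
    (abs_mul_le_of_abs_le (abs_indicator_one_le _ _) (abs_indicator_one_le _ _))

lemma measurable_integralOp {K : α → β → ℝ} (hK : Measurable (uncurry K)) {φ : β → ℝ}
    (hφ : Measurable φ) : Measurable (integralOp ν K φ) :=
  (hK.mul (hφ.comp measurable_snd)).stronglyMeasurable.integral_prod_right'.measurable

lemma TendstoWeakStar.tendsto_integralOp {d : ℕ → β → ℝ} {b : β → ℝ}
    (h : TendstoWeakStar ν d b) {K : α → β → ℝ} (hK : Measurable (uncurry K)) {M : ℝ}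
    (hKM : ∀ x y, |K x y| ≤ M) (x : α) :
    Tendsto (fun n => integralOp ν K (d n) x) atTop (𝓝 (integralOp ν K b x)) := by
  simpa only [integralOp, mul_comm (K x _)] using
    h (K x) (integrable_of_abs_le (hK.comp measurable_prodMk_left) (hKM x))

theorem TendstoWeakStar.tendsto_integral_integral_mul_mul {K : α → β → ℝ}
    (hK : Measurable (uncurry K)) {M : ℝ} (hKM : ∀ x y, |K x y| ≤ M)
    {c : ℕ → α → ℝ} {a : α → ℝ} {d : ℕ → β → ℝ} {b : β → ℝ}
    (hca : TendstoWeakStar μ c a) (hdb : TendstoWeakStar ν d b)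
    (hc : ∀ n, Measurable (c n)) {C : ℝ} (hcC : ∀ n x, |c n x| ≤ C)
    (hd : ∀ n, Measurable (d n)) {D : ℝ} (hdD : ∀ n y, |d n y| ≤ D)
    (hb : Measurable b) {B : ℝ} (hbB : ∀ y, |b y| ≤ B) :
    Tendsto (fun n => ∫ x, ∫ y, K x y * (c n x * d n y) ∂ν ∂μ) atTop
      (𝓝 (∫ x, ∫ y, K x y * (a x * b y) ∂ν ∂μ)) := by
  simp only [integral_integral_mul_mul_eq_integral_mul_integralOp]
  set T := integralOp ν K
  set R := M * D * ν.real univ + M * B * ν.real univ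
  have hTdiff : ∀ n x, |T (d n) x - T b x| ≤ R := fun n x =>
    (abs_sub _ _).trans (add_le_add (abs_integralOp_le hKM (hdD n) x) (abs_integralOp_le hKM hbB x))
  have hTdiff_meas : ∀ n, Measurable fun x => T (d n) x - T b x := fun n =>
    (measurable_integralOp hK (hd n)).sub (measurable_integralOp hK hb)
  have herror : Tendsto (fun n => ∫ x, c n x * (T (d n) x - T b x) ∂μ) atTop (𝓝 0) := by
    have hpt : ∀ x, Tendsto (fun n => c n x * (T (d n) x - T b x)) atTop (𝓝 0) := fun x => by
      have hT : Tendsto (fun n => T (d n) x - T b x) atTop (𝓝 0) := by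
        have := (hdb.tendsto_integralOp hK hKM x).sub_const (T b x)
        rwa [sub_self] at this
      refine squeeze_zero_norm (fun n => ?_) (by simpa using hT.abs.const_mul C)
      rw [Real.norm_eq_abs, abs_mul]
      exact mul_le_mul_of_nonneg_right (hcC n x) (abs_nonneg _)
    simpa using tendsto_integral_of_dominated_convergence (fun _ => C * R)
      (fun n => ((hc n).mul (hTdiff_meas n)).aestronglyMeasurable) (integrable_const _)
      (fun n => ae_of_all _ fun x => abs_mul_le_of_abs_le (hcC n x) (hTdiff n x))
      (ae_of_all _ hpt)
  have hsplit : ∀ n, ∫ x, c n x * T (d n) x ∂μ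
      = ∫ x, c n x * (T (d n) x - T b x) ∂μ + ∫ x, c n x * T b x ∂μ := fun n => by
    rw [← integral_add]
    · simp only [mul_sub, sub_add_cancel]
    · exact integrable_of_abs_le ((hc n).mul (hTdiff_meas n))
        fun x => abs_mul_le_of_abs_le (hcC n x) (hTdiff n x)
    · exact integrable_of_abs_le ((hc n).mul (measurable_integralOp hK hb))
        fun x => abs_mul_le_of_abs_le (hcC n x) (abs_integralOp_le hKM hbB x)
  simp only [hsplit]
  simpa using herror.add
    (hca (T b) (integrable_of_abs_le (measurable_integralOp hK hb) (abs_integralOp_le hKM hbB)))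

lemma integral_integral_mul_comp_eq_sum_indicator {K : α → β → ℝ} (hK : Measurable (uncurry K))
    {M : ℝ} (hKM : ∀ x y, |K x y| ≤ M) {u : α → ℝ} {v : β → ℝ} (hu : Measurable u)
    (hv : Measurable v) (hu1 : ∀ x, u x = -1 ∨ u x = 1) (hv1 : ∀ y, v y = -1 ∨ v y = 1)
    (f : ℝ → ℝ → ℝ) :
    ∫ x, ∫ y, K x y * f (u x) (v y) ∂ν ∂μ
      = ∑ h ∈ ({1, -1} : Finset ℝ), ∑ k ∈ ({1, -1} : Finset ℝ), f h k *
          ∫ x, ∫ y, K x y * ({x | u x = h}.indicator 1 x * {y | v y = k}.indicator 1 y) ∂ν ∂μ := by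
  set P : Finset ℝ := {1, -1}
  set G : ℝ → ℝ → α → β → ℝ := fun h k x y =>
    K x y * ({x | u x = h}.indicator 1 x * {y | v y = k}.indicator 1 y)
  have hG : ∀ h k, Integrable (uncurry (G h k)) (μ.prod ν) := fun h k =>
    integrable_uncurry_mul_indicator_mul_indicator hK hKM (hu (measurableSet_singleton h))
      (hv (measurableSet_singleton k))
  have hpt : ∀ x y, K x y * f (u x) (v y) = ∑ h ∈ P, ∑ k ∈ P, f h k * G h k x y := by
    intro x y
    have hne : (1 : ℝ) ≠ -1 := by norm_num
    rcases hu1 x with hx | hx <;> rcases hv1 y with hy | hy <;>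
      simp [P, G, Finset.sum_pair hne, indicator_apply, hx, hy, hne, hne.symm, mul_comm]
  have hsum : ∀ h k, Integrable (fun p : α × β => f h k * G h k p.1 p.2) (μ.prod ν) :=
    fun h k => (hG h k).const_mul (f h k)
  have hsum' : ∀ h, Integrable (fun p : α × β => ∑ k ∈ P, f h k * G h k p.1 p.2) (μ.prod ν) :=
    fun h => integrable_finsetSum _ fun k _ => hsum h k
  calc ∫ x, ∫ y, K x y * f (u x) (v y) ∂ν ∂μ
      = ∫ x, ∫ y, ∑ h ∈ P, ∑ k ∈ P, f h k * G h k x y ∂ν ∂μ := by simp only [hpt]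
    _ = ∑ h ∈ P, ∑ k ∈ P, ∫ p, f h k * G h k p.1 p.2 ∂μ.prod ν := by
        rw [integral_integral (integrable_finsetSum _ fun h _ => hsum' h),
          integral_finsetSum _ fun h _ => hsum' h]
        exact Finset.sum_congr rfl fun h _ => integral_finsetSum _ fun k _ => hsum h k
    _ = _ := by simp only [integral_const_mul, ← integral_integral (hG _ _)]; rfl

end

instance isFiniteMeasure_restrict_I01 : IsFiniteMeasure (volume.restrict I01) :=
  Real.isFiniteMeasure_restrict_Icc 0 1

lemma abs_setIntegral_le_of_subset_I01 {F : ℝ → ℝ} {C : ℝ} (hF : ∀ y, |F y| ≤ C) {S : Set ℝ}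
    (hS : S ⊆ I01) : |∫ y in S, F y| ≤ C := by
  have hI : volume I01 = 1 := by simp [I01]
  have hvol : volume.real S ≤ 1 := by
    simpa [Measure.real, hI] using measureReal_mono (μ := volume) hS (by simp [hI])
  calc |∫ y in S, F y| ≤ C * volume.real S := by
        rw [← Real.norm_eq_abs]
        exact norm_setIntegral_le_of_norm_le_const
          ((measure_mono hS).trans_lt (by rw [hI]; exact ENNReal.one_lt_top)) fun y _ => hF y
    _ ≤ C := mul_le_of_le_one_right ((abs_nonneg _).trans (hF 0)) hvol

lemma abs_setIntegral_setIntegral_le_cutNorm {U : ℝ → ℝ → ℝ} {C : ℝ} (hU : ∀ x y, |U x y| ≤ C)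
    {S T : Set ℝ} (hS : MeasurableSet S) (hT : MeasurableSet T) (hSI : S ⊆ I01) (hTI : T ⊆ I01) :
    |∫ x in S, ∫ y in T, U x y| ≤ cutNorm U := by
  refine le_ciSup (f := fun p : {p : Set ℝ × Set ℝ //
      MeasurableSet p.1 ∧ MeasurableSet p.2 ∧ p.1 ⊆ I01 ∧ p.2 ⊆ I01} =>
    |∫ x in p.1.1, ∫ y in p.1.2, U x y|) ⟨C, ?_⟩ ⟨(S, T), hS, hT, hSI, hTI⟩
  rintro _ ⟨p, rfl⟩
  exact abs_setIntegral_le_of_subset_I01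
    (fun x => abs_setIntegral_le_of_subset_I01 (hU x) p.2.2.2.2) p.2.2.2.1

lemma tendsto_integral_integral_mul_indicator_of_cutNorm {U : ℕ → ℝ → ℝ → ℝ} {C : ℝ}
    (hU : ∀ n x y, |U n x y| ≤ C) (hcut : Tendsto (fun n => cutNorm (U n)) atTop (𝓝 0))
    {S T : ℕ → Set ℝ} (hS : ∀ n, MeasurableSet (S n)) (hT : ∀ n, MeasurableSet (T n)) :
    Tendsto (fun n => ∫ x in I01, ∫ y in I01,
      U n x y * ((S n).indicator 1 x * (T n).indicator 1 y)) atTop (𝓝 0) := by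
  refine squeeze_zero_norm (fun n => ?_) hcut
  have hpt : ∀ x y, U n x y * ((S n).indicator 1 x * (T n).indicator 1 y)
      = (S n).indicator 1 x * ((T n).indicator 1 y * U n x y) := fun x y => by ring
  simp only [hpt, integral_const_mul, setIntegral_indicator_one_mul (hS n),
    setIntegral_indicator_one_mul (hT n), Real.norm_eq_abs]
  exact abs_setIntegral_setIntegral_le_cutNorm (hU n) (measurableSet_Icc.inter (hS n))
    (measurableSet_Icc.inter (hT n)) inter_subset_left inter_subset_left

theorem tendsto_integral_integral_mul_indicator {Wn : ℕ → ℝ → ℝ → ℝ} {W : ℝ → ℝ → ℝ}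
    (hWn : ∀ n, Measurable (uncurry (Wn n))) (hW : Measurable (uncurry W)) {M : ℝ}
    (hWnM : ∀ n x y, |Wn n x y| ≤ M) (hWM : ∀ x y, |W x y| ≤ M)
    (hcut : Tendsto (fun n => cutNorm (fun x y => Wn n x y - W x y)) atTop (𝓝 0))
    {S T : ℕ → Set ℝ} (hS : ∀ n, MeasurableSet (S n)) (hT : ∀ n, MeasurableSet (T n))
    {a b : ℝ → ℝ} (hSa : TendstoWeakStar (volume.restrict I01) (fun n => (S n).indicator 1) a)
    (hTb : TendstoWeakStar (volume.restrict I01) (fun n => (T n).indicator 1) b)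
    (hb : Measurable b) {B : ℝ} (hbB : ∀ y, |b y| ≤ B) :
    Tendsto (fun n => ∫ x in I01, ∫ y in I01,
      Wn n x y * ((S n).indicator 1 x * (T n).indicator 1 y)) atTop
      (𝓝 (∫ x in I01, ∫ y in I01, W x y * (a x * b y))) := by
  have hdiffM : ∀ n x y, |Wn n x y - W x y| ≤ M + M := fun n x y =>
    (abs_sub _ _).trans (add_le_add (hWnM n x y) (hWM x y))
  have hsplit : ∀ n, ∫ x in I01, ∫ y in I01, Wn n x y * ((S n).indicator 1 x * (T n).indicator 1 y)
      = (∫ x in I01, ∫ y in I01, (Wn n x y - W x y) * ((S n).indicator 1 x * (T n).indicator 1 y))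
        + ∫ x in I01, ∫ y in I01, W x y * ((S n).indicator 1 x * (T n).indicator 1 y) := by
    intro n
    have := integral_integral_add (μ := volume.restrict I01) (ν := volume.restrict I01)
      (integrable_uncurry_mul_indicator_mul_indicator ((hWn n).sub hW) (hdiffM n) (hS n) (hT n))
      (integrable_uncurry_mul_indicator_mul_indicator hW hWM (hS n) (hT n))
    simp only [uncurry_apply_pair] at this
    rw [← this]
    simp only [← add_mul, sub_add_cancel]
  simp only [hsplit]
  simpa using (tendsto_integral_integral_mul_indicator_of_cutNorm hdiffM hcut hS hT).add
    (hSa.tendsto_integral_integral_mul_mul hW hWM hTb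
      (fun n => measurable_const.indicator (hS n)) (fun n => abs_indicator_one_le (S n))
      (fun n => measurable_const.indicator (hT n)) (fun n => abs_indicator_one_le (T n)) hb hbB)

theorem stmt_7 (Wn : ℕ → ℝ → ℝ → ℝ) (W : ℝ → ℝ → ℝ)
    (hWnmeas : ∀ n, Measurable (fun p : ℝ × ℝ => Wn n p.1 p.2))
    (hWnrange : ∀ n x y, Wn n x y ∈ Set.Icc (0:ℝ) 1)
    (hWmeas : Measurable (fun p : ℝ × ℝ => W p.1 p.2))
    (hWrange : ∀ x y, W x y ∈ Set.Icc (0:ℝ) 1)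
    (hcut : Tendsto (fun n => cutNorm (fun x y => Wn n x y - W x y)) atTop (nhds 0))
    (f : ℝ → ℝ → ℝ)
    (u : ℕ → ℝ → ℝ) (humeas : ∀ n, Measurable (u n))
    (hurange : ∀ n x, u n x = -1 ∨ u n x = 1)
    (θ : ℝ → ℝ) (hθmeas : Measurable θ) (hθrange : ∀ x, θ x ∈ Set.Icc (0:ℝ) 1)
    -- `θⁿ`, the indicator of `{uₙ = 1}`, converges weakly-* in `L^∞([0,1])` to `θ`:
    (hweak : ∀ φ : ℝ → ℝ, IntegrableOn φ I01 →
      Tendsto (fun n => ∫ x in I01, (Set.indicator {x | u n x = 1} (fun _ => (1:ℝ)) x) * φ x)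
        atTop (nhds (∫ x in I01, θ x * φ x))) :
    Tendsto (fun n => ∫ x in I01, ∫ y in I01, Wn n x y * f (u n x) (u n y)) atTop
      (nhds (f 1 1 * (∫ x in I01, ∫ y in I01, W x y * (θ x * θ y))
           + f 1 (-1) * (∫ x in I01, ∫ y in I01, W x y * (θ x * (1 - θ y)))
           + f (-1) 1 * (∫ x in I01, ∫ y in I01, W x y * ((1 - θ x) * θ y))
           + f (-1) (-1) * (∫ x in I01, ∫ y in I01, W x y * ((1 - θ x) * (1 - θ y))))) := by
  have habs : ∀ {r : ℝ}, r ∈ Icc (0 : ℝ) 1 → |r| ≤ 1 := fun hr =>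
    abs_le.2 ⟨by linarith [hr.1], hr.2⟩
  have hne : (1 : ℝ) ≠ -1 := by norm_num
  have hplus : TendstoWeakStar (volume.restrict I01) (fun n => {x | u n x = 1}.indicator 1) θ :=
    hweak
  obtain ⟨ϑ, hϑ_one, hϑ_neg_one⟩ : ∃ ϑ : ℝ → ℝ → ℝ, ϑ 1 = θ ∧ ϑ (-1) = fun x => 1 - θ x :=
    ⟨fun h x => if h = 1 then θ x else 1 - θ x, by simp, by simp [hne.symm]⟩
  have hϑ : ∀ h ∈ ({1, -1} : Finset ℝ), TendstoWeakStar (volume.restrict I01)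
      (fun n => {x | u n x = h}.indicator 1) (ϑ h) ∧ Measurable (ϑ h) ∧ ∀ x, |ϑ h x| ≤ 1 := by
    simp only [Finset.mem_insert, Finset.mem_singleton]
    rintro h (rfl | rfl)
    · exact hϑ_one ▸ ⟨hplus, hθmeas, fun x => habs (hθrange x)⟩
    · refine hϑ_neg_one ▸ ⟨hplus.indicator_eq_neg_one humeas hurange hθmeas
        (fun x => habs (hθrange x)), hθmeas.const_sub 1, fun x => habs ?_⟩
      exact ⟨by linarith [(hθrange x).2], by linarith [(hθrange x).1]⟩
  simp only [integral_integral_mul_comp_eq_sum_indicator (hWnmeas _)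
    (fun x y => habs (hWnrange _ x y)) (humeas _) (humeas _) (hurange _) (hurange _)]
  have hlim := tendsto_finsetSum _ fun h hh => tendsto_finsetSum _ fun k hk =>
    (tendsto_integral_integral_mul_indicator hWnmeas hWmeas (fun n x y => habs (hWnrange n x y))
      (fun x y => habs (hWrange x y)) hcut (S := fun n => {x | u n x = h})
      (T := fun n => {x | u n x = k}) (fun n => humeas n (measurableSet_singleton h))
      (fun n => humeas n (measurableSet_singleton k)) (hϑ h hh).1 (hϑ k hk).1
      (hϑ k hk).2.1 (hϑ k hk).2.2).const_mul (f h k)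
  convert hlim using 2
  simp only [Finset.sum_pair hne, hϑ_one, hϑ_neg_one]
  ring
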